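/- arXiv:2105.03139 — 3 statements merged into one kernel-verified Lean document; each statement's English description precedes it below -/
import Mathlib

section
/- Let S = (s_1, ..., s_N) be a sequence of detections where each s_i is independently a true positive with probability p_i. Define AP(S) as the average over n of the precision at the n-th true positive (precision at rank k is the number of true positives among the first k divided by k). If there exist indices m < n with p_m < p_n, then swapping s_m and s_n (i.e., swapping p_m and p_n) does not decrease the expected AP. -/
open Finset

/-- Number of true detections among the first `k+1` (ranks `1..k+1`) entries. -/
def prefCount {N : ℕ} (b : Fin N → Bool) (k : Fin N) : ℕ :=
  (Finset.univ.filter (fun j : Fin N => j ≤ k ∧ b j = true)).card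

/-- Total number of true detections. -/
def numTrue {N : ℕ} (b : Fin N → Bool) : ℕ :=
  (Finset.univ.filter (fun j : Fin N => b j = true)).card

/-- Average precision of a ranked binary detection sequence (0 if no true positives). -/
noncomputable def AP {N : ℕ} (b : Fin N → Bool) : ℝ :=
  if numTrue b = 0 then 0 else
    (1 / (numTrue b : ℝ)) *
      ∑ k ∈ Finset.univ.filter (fun k : Fin N => b k = true),
        (prefCount b k : ℝ) / ((k : ℕ) + 1)

/-- Probability of outcome `b` for independent Bernoulli detections with parameters `p`. -/
noncomputable def outcomeWeight {N : ℕ} (p : Fin N → ℝ) (b : Fin N → Bool) : ℝ :=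
  ∏ i, if b i then p i else 1 - p i

/-- Expected average precision of independent Bernoulli detections. -/
noncomputable def eAP {N : ℕ} (p : Fin N → ℝ) : ℝ :=
  ∑ b : Fin N → Bool, outcomeWeight p b * AP b

/-! With `f k = 1 / (k + 1)` and `S` the set of true positives, `AP b · numTrue b` is the
rank-weighted sum `∑ k ∈ S, #{j ∈ S | j ≤ k} · f k`. Symmetrizing over pairs gives
`2 · (that sum) = ∑ j ∈ S, ∑ k ∈ S, f (max j k) + ∑ k ∈ S, f k`, which is termwise antitone in the
positions of `S`; so moving a true positive to a later rank cannot increase AP.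

Let `σ` be the swap of `m` and `n` and `w` the Bernoulli weight. Then
`eAP (p ∘ σ) - eAP p = ∑ b, w b · (AP (b ∘ σ) - AP b)`, and pairing `b` with `b ∘ σ` turns this
into half of `∑ b, (w b - w (b ∘ σ)) · (AP (b ∘ σ) - AP b)`. Only outcomes with `b m ≠ b n`
contribute, and for `b m = true`, `b n = false` both factors are `≤ 0`: `w b ≤ w (b ∘ σ)` as
`p m ≤ p n`, and `AP (b ∘ σ) ≤ AP b` by the first paragraph. -/

section RankWeightedSum

variable {α : Type*} [LinearOrder α]

def rankWeightedSum (S : Finset α) (f : α → ℝ) : ℝ :=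
  ∑ k ∈ S, #(S.filter (· ≤ k)) * f k

theorem two_mul_rankWeightedSum (S : Finset α) (f : α → ℝ) :
    2 * rankWeightedSum S f = ∑ j ∈ S, ∑ k ∈ S, f (max j k) + ∑ k ∈ S, f k := by
  have hmax : ∀ j k, f (max j k) = ((if j ≤ k then f k else 0) + if k ≤ j then f j else 0)
      - if j = k then f k else 0 := by
    intro j k
    rcases lt_trichotomy j k with h | rfl | h
    · simp [h.le, h.not_ge, h.ne]
    · simp
    · simp [h.le, h.not_ge, h.ne']
  have hcount : ∀ k, ∑ j ∈ S, (if j ≤ k then f k else 0) = #(S.filter (· ≤ k)) * f k := by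
    intro k
    rw [← Finset.sum_filter, Finset.sum_const, nsmul_eq_mul]
  simp only [hmax, Finset.sum_sub_distrib, Finset.sum_add_distrib, Finset.sum_ite_eq,
    rankWeightedSum]
  rw [Finset.sum_comm (f := fun j k => if j ≤ k then f k else 0)]
  simp only [hcount, sum_ite_mem, inter_self, sub_add_cancel]
  ring

theorem rankWeightedSum_map_le {S : Finset α} {f : α → ℝ} (hf : Antitone f) (e : α ↪ α)
    (he : ∀ k ∈ S, k ≤ e k) : rankWeightedSum (S.map e) f ≤ rankWeightedSum S f := by
  suffices 2 * rankWeightedSum (S.map e) f ≤ 2 * rankWeightedSum S f by linarith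
  rw [two_mul_rankWeightedSum, two_mul_rankWeightedSum]
  simp only [Finset.sum_map]
  gcongr with j hj k hk k hk
  · exact hf (max_le_max (he j hj) (he k hk))
  · exact hf (he k hk)

end RankWeightedSum

theorem AP_eq_rankWeightedSum {N : ℕ} (b : Fin N → Bool) :
    AP b = (numTrue b : ℝ)⁻¹ *
      rankWeightedSum (univ.filter (fun k => b k = true)) (fun k => 1 / ((k : ℕ) + 1)) := by
  rw [AP]
  split_ifs with h
  · simp [h]
  · rw [one_div, rankWeightedSum]
    congr 1
    refine Finset.sum_congr rfl fun k _ => ?_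
    rw [prefCount, Finset.filter_filter, mul_one_div]
    simp only [and_comm]

theorem filter_comp_perm_symm {N : ℕ} (b : Fin N → Bool) (τ : Equiv.Perm (Fin N)) :
    univ.filter (fun k => (b ∘ τ.symm) k = true) =
      (univ.filter (fun k => b k = true)).map τ.toEmbedding := by
  ext k
  simp [Finset.mem_map_equiv]

theorem numTrue_comp_perm_symm {N : ℕ} (b : Fin N → Bool) (τ : Equiv.Perm (Fin N)) :
    numTrue (b ∘ τ.symm) = numTrue b := by
  rw [numTrue, filter_comp_perm_symm, Finset.card_map, numTrue]

theorem AP_comp_perm_symm_le {N : ℕ} (b : Fin N → Bool) (τ : Equiv.Perm (Fin N))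
    (hτ : ∀ k, b k = true → k ≤ τ k) : AP (b ∘ τ.symm) ≤ AP b := by
  rw [AP_eq_rankWeightedSum, AP_eq_rankWeightedSum, numTrue_comp_perm_symm, filter_comp_perm_symm]
  gcongr
  refine rankWeightedSum_map_le (fun i j hij => ?_) _ fun k hk => hτ k (by simpa using hk)
  gcongr
  exact_mod_cast hij

theorem AP_comp_swap_le {N : ℕ} (b : Fin N → Bool) {m n : Fin N} (hmn : m < n)
    (hbm : b m = true) (hbn : b n = false) : AP (b ∘ Equiv.swap m n) ≤ AP b := by
  refine Equiv.symm_swap m n ▸ AP_comp_perm_symm_le b _ fun k hk => ?_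
  rcases eq_or_ne k m with rfl | hkm
  · simpa using hmn.le
  · have hkn : k ≠ n := by rintro rfl; simp [hbn] at hk
    simp [Equiv.swap_apply_of_ne_of_ne hkm hkn]

theorem outcomeWeight_comp_perm {N : ℕ} (p : Fin N → ℝ) (σ : Equiv.Perm (Fin N))
    (b : Fin N → Bool) : outcomeWeight (p ∘ σ) b = outcomeWeight p (b ∘ σ.symm) :=
  Fintype.prod_equiv σ _ _ fun i => by simp

theorem eAP_comp_perm {N : ℕ} (p : Fin N → ℝ) (σ : Equiv.Perm (Fin N)) :
    eAP (p ∘ σ) = ∑ b : Fin N → Bool, outcomeWeight p b * AP (b ∘ σ) := by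
  rw [eAP]
  refine (Fintype.sum_equiv (σ.symm.arrowCongr (Equiv.refl Bool)) _ _ fun b => ?_).symm
  change _ = outcomeWeight (p ∘ σ) (b ∘ σ) * AP (b ∘ σ)
  rw [outcomeWeight_comp_perm, Function.comp_assoc, Equiv.self_comp_symm, Function.comp_id]

theorem outcomeWeight_eq_mul_prod_compl {N : ℕ} (p : Fin N → ℝ) {m n : Fin N} (hmn : m ≠ n)
    (b : Fin N → Bool) : outcomeWeight p b = (if b m then p m else 1 - p m) *
      (if b n then p n else 1 - p n) * ∏ i ∈ {m, n}ᶜ, (if b i then p i else 1 - p i) := by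
  rw [outcomeWeight, ← Finset.prod_mul_prod_compl {m, n}, Finset.prod_pair hmn]

theorem outcomeWeight_le_comp_swap {N : ℕ} {p : Fin N → ℝ} (hp : ∀ i, 0 ≤ p i ∧ p i ≤ 1)
    {m n : Fin N} (hmn : m ≠ n) (hpmn : p m ≤ p n) {b : Fin N → Bool} (hbm : b m = true)
    (hbn : b n = false) : outcomeWeight p b ≤ outcomeWeight p (b ∘ Equiv.swap m n) := by
  have hrest : ∏ i ∈ {m, n}ᶜ, (if (b ∘ Equiv.swap m n) i then p i else 1 - p i) =
      ∏ i ∈ {m, n}ᶜ, (if b i then p i else 1 - p i) := by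
    refine Finset.prod_congr rfl fun i hi => ?_
    simp only [Finset.mem_compl, Finset.mem_insert, Finset.mem_singleton, not_or] at hi
    simp [Equiv.swap_apply_of_ne_of_ne hi.1 hi.2]
  have hrest_nonneg : 0 ≤ ∏ i ∈ {m, n}ᶜ, (if b i then p i else 1 - p i) :=
    Finset.prod_nonneg fun i _ => by split_ifs <;> linarith [hp i]
  rw [outcomeWeight_eq_mul_prod_compl p hmn, outcomeWeight_eq_mul_prod_compl p hmn, hrest]
  simp only [Function.comp_apply, Equiv.swap_apply_left, Equiv.swap_apply_right, hbm, hbn,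
    if_true, Bool.false_eq_true, if_false]
  exact mul_le_mul_of_nonneg_right (by nlinarith) hrest_nonneg

theorem comp_swap_involutive {α β : Type*} [DecidableEq α] (m n : α) :
    Function.Involutive fun b : α → β => b ∘ Equiv.swap m n :=
  fun b => funext fun i => by simp

theorem swap_term_nonneg {N : ℕ} {p : Fin N → ℝ} (hp : ∀ i, 0 ≤ p i ∧ p i ≤ 1) {m n : Fin N}
    (hmn : m < n) (hpmn : p m ≤ p n) (b : Fin N → Bool) :
    0 ≤ (outcomeWeight p b - outcomeWeight p (b ∘ Equiv.swap m n)) *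
      (AP (b ∘ Equiv.swap m n) - AP b) := by
  set c := b ∘ Equiv.swap m n
  cases hbm : b m <;> cases hbn : b n
  case false.false | true.true =>
    have hc : c = b := funext (Equiv.apply_swap_eq_self (hbm.trans hbn.symm))
    simp [hc]
  case true.false =>
    exact mul_nonneg_of_nonpos_of_nonpos
      (sub_nonpos.2 (outcomeWeight_le_comp_swap hp hmn.ne hpmn hbm hbn))
      (sub_nonpos.2 (AP_comp_swap_le b hmn hbm hbn))
  case false.true =>
    have hcm : c m = true := by simp [c, hbn]
    have hcn : c n = false := by simp [c, hbm]
    have hcc : c ∘ Equiv.swap m n = b := comp_swap_involutive m n b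
    refine mul_nonneg (sub_nonneg.2 ?_) (sub_nonneg.2 ?_)
    · simpa [hcc] using outcomeWeight_le_comp_swap hp hmn.ne hpmn hcm hcn
    · simpa [hcc] using AP_comp_swap_le c hmn hcm hcn

/-- Swapping two detections `m < n` with `p m < p n` does not decrease the expected AP. -/
theorem stmt0 {N : ℕ} (p : Fin N → ℝ) (hp : ∀ i, 0 ≤ p i ∧ p i ≤ 1)
    (m n : Fin N) (hmn : m < n) (hpmn : p m < p n) :
    eAP p ≤ eAP (p ∘ Equiv.swap m n) := by
  set σ := Equiv.swap m n
  let F : (Fin N → Bool) → ℝ := fun b => outcomeWeight p b * (AP (b ∘ σ) - AP b)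
  have hdiff : eAP (p ∘ σ) - eAP p = ∑ b, F b := by
    rw [eAP_comp_perm, eAP, ← Finset.sum_sub_distrib]
    simp only [F, mul_sub]
  have hpair : ∀ b, F b + F (b ∘ σ) =
      (outcomeWeight p b - outcomeWeight p (b ∘ σ)) * (AP (b ∘ σ) - AP b) := by
    intro b
    have hb : (b ∘ σ) ∘ σ = b := comp_swap_involutive m n b
    simp only [F, hb]
    ring
  have hreindex : ∑ b, F (b ∘ σ) = ∑ b, F b :=
    Equiv.sum_comp ((comp_swap_involutive m n).toPerm _) F
  have hsum : 0 ≤ ∑ b, (F b + F (b ∘ σ)) := by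
    simp only [hpair]
    exact Finset.sum_nonneg fun b _ => swap_term_nonneg hp hmn hpmn.le b
  rw [Finset.sum_add_distrib, hreindex] at hsum
  linarith
end

section
/- Fix a binary sequence with exactly T ones, and consider two sequences S_1 and S_2 that agree everywhere except that S_1 has a one at position m and a zero at position n (m < n), while S_2 has a zero at position m and a one at position n. Then AP(S_1) ≥ AP(S_2), with strict inequality if T ≥ 1. -/
/-!
Write `w k = 1 / (k + 1)` for the weight of position `k` (rank `k + 1`), so that `T · AP` is
the sum, over true positions `k`, of `w k` times the number of true positions up to `k`. Adding
a true position `m` to a set `S` raises this sum by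
`(#{j ∈ S | j < m} + 1) · w m + ∑_{k ∈ S, k > m} w k`.
For `m < n` the gain at `m` beats the gain at `n`: the later position has `w n < w m`, and each
true position strictly between `m` and `n`, counted once more at `n`, receives from `m` a
weight `w k ≥ w n`.
-/

open Finset

section RankScore

variable {ι : Type*} [LinearOrder ι] (w : ι → ℝ)

def rankScore (S : Finset ι) : ℝ :=
  ∑ k ∈ S, (#{j ∈ S | j ≤ k} : ℝ) * w k

def insertionGain (S : Finset ι) (m : ι) : ℝ :=
  (#{j ∈ S | j < m} + 1 : ℝ) * w m + ∑ k ∈ S with m < k, w k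

theorem rankScore_insert {S : Finset ι} {m : ι} (hm : m ∉ S) :
    rankScore w (insert m S) = rankScore w S + insertionGain w S m := by
  have count_at_m : #{j ∈ insert m S | j ≤ m} = #{j ∈ S | j < m} + 1 := by
    rw [filter_insert, if_pos le_rfl, card_insert_of_notMem (by simp [hm])]
    congr 2
    exact filter_congr fun j hj => (ne_of_mem_of_not_mem hj hm).le_iff_lt
  have count_at : ∀ k ∈ S, (#{j ∈ insert m S | j ≤ k} : ℝ)
      = #{j ∈ S | j ≤ k} + if m < k then 1 else 0 := by
    intro k hk
    have hmk : m ≤ k ↔ m < k := (ne_of_mem_of_not_mem hk hm).symm.le_iff_lt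
    simp only [filter_insert, hmk]
    split_ifs
    · rw [card_insert_of_notMem (by simp [hm])]; push_cast; ring
    · simp
  rw [rankScore, sum_insert hm, count_at_m, sum_congr rfl fun k hk => by rw [count_at k hk],
    rankScore, insertionGain, sum_filter]
  simp only [add_mul, ite_mul, one_mul, zero_mul, sum_add_distrib]
  push_cast
  ring

theorem insertionGain_lt_of_lt (hw : StrictAnti w) {S : Finset ι} {m n : ι} (hmn : m < n)
    (hm : m ∉ S) (hn : n ∉ S) : insertionGain w S n < insertionGain w S m := by
  set I := {k ∈ S | m < k ∧ k < n}
  have count_split : #{j ∈ S | j < n} = #{j ∈ S | j < m} + #I := by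
    rw [← card_filter_add_card_filter_not (fun j => j < m), filter_filter, filter_filter]
    congr 2
    · exact filter_congr fun j _ => ⟨fun h => h.2, fun h => ⟨h.trans hmn, h⟩⟩
    · exact filter_congr fun j hj => by
        rw [not_lt, (ne_of_mem_of_not_mem hj hm).symm.le_iff_lt]
        exact ⟨fun h => ⟨h.2, h.1⟩, fun h => ⟨h.2, h.1⟩⟩
  have sum_split :
      ∑ k ∈ S with m < k, w k = ∑ k ∈ I, w k + ∑ k ∈ S with n < k, w k := by
    rw [← sum_filter_add_sum_filter_not _ (fun k => k < n), filter_filter, filter_filter]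
    congr 2
    exact filter_congr fun k hk => by
      rw [not_lt, (ne_of_mem_of_not_mem hk hn).symm.le_iff_lt]
      exact ⟨And.right, fun h => ⟨hmn.trans h, h⟩⟩
  have sum_I : (#I : ℝ) * w n ≤ ∑ k ∈ I, w k := by
    rw [← nsmul_eq_mul]
    exact card_nsmul_le_sum _ _ _ fun k hk => (hw (mem_filter.mp hk).2.2).le
  have weight_lt : w n < w m := hw hmn
  rw [insertionGain, insertionGain, count_split, sum_split]
  push_cast
  linarith [mul_pos (by positivity : (0 : ℝ) < #{j ∈ S | j < m} + 1) (sub_pos.mpr weight_lt)]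

theorem rankScore_insert_lt_of_lt (hw : StrictAnti w) {S : Finset ι} {m n : ι} (hmn : m < n)
    (hm : m ∉ S) (hn : n ∉ S) : rankScore w (insert n S) < rankScore w (insert m S) := by
  rw [rankScore_insert w hm, rankScore_insert w hn]
  linarith [insertionGain_lt_of_lt w hw hmn hm hn]

end RankScore

theorem strictAnti_inv_succ_val {N : ℕ} :
    StrictAnti fun k : Fin N => ((k : ℕ) + 1 : ℝ)⁻¹ :=
  fun a b hab => inv_strictAnti₀ (by positivity) (by exact_mod_cast Nat.succ_lt_succ hab)

theorem AP_eq_rankScore_div {N : ℕ} (b : Fin N → Bool) :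
    AP b =
      rankScore (fun k : Fin N => ((k : ℕ) + 1 : ℝ)⁻¹) {k | b k = true} / numTrue b := by
  have prefCount_eq : ∀ k, prefCount b k = #{j ∈ {k | b k = true} | j ≤ k} := fun k => by
    rw [prefCount, filter_filter]; simp only [and_comm]
  rw [AP, rankScore]
  split_ifs with h
  · simp [h]
  · simp only [prefCount_eq, div_eq_mul_inv, one_mul, mul_comm (_⁻¹ : ℝ) (∑ _ ∈ _, _)]

/-- Swapping a true detection at `m` with a false detection at a later position `n`
(all else equal) does not decrease AP, and strictly increases it when `T ≥ 1`. -/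
theorem stmt2 {N : ℕ} (b1 b2 : Fin N → Bool) (m n : Fin N) (hmn : m < n)
    (h1m : b1 m = true) (h1n : b1 n = false)
    (h2m : b2 m = false) (h2n : b2 n = true)
    (hagree : ∀ k : Fin N, k ≠ m → k ≠ n → b1 k = b2 k) :
    AP b2 ≤ AP b1 ∧ (1 ≤ numTrue b1 → AP b2 < AP b1) := by
  set C : Finset (Fin N) := ({k | b1 k = true} : Finset (Fin N)).erase m
  have hm : m ∉ C := notMem_erase m _
  have hn : n ∉ C := by simp [C, h1n]
  have true1 : ({k | b1 k = true} : Finset (Fin N)) = insert m C :=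
    (insert_erase (by simp [h1m])).symm
  have true2 : ({k | b2 k = true} : Finset (Fin N)) = insert n C := by
    ext k
    by_cases hkm : k = m
    · simp [hkm, h2m, hmn.ne, hm]
    by_cases hkn : k = n
    · simp [hkn, h2n]
    · simp [C, hkm, hkn, hagree k hkm hkn]
  have hT : numTrue b2 = numTrue b1 := by
    rw [numTrue, numTrue, true1, true2, card_insert_of_notMem hm, card_insert_of_notMem hn]
  have hT_pos : (0 : ℝ) < numTrue b1 := by
    rw [numTrue, true1, card_insert_of_notMem hm]; exact_mod_cast Nat.succ_pos _
  have hlt : AP b2 < AP b1 := by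
    rw [AP_eq_rankScore_div, AP_eq_rankScore_div, hT, true1, true2]
    exact div_lt_div_of_pos_right
      (rankScore_insert_lt_of_lt _ strictAnti_inv_succ_val hmn hm hn) hT_pos
  exact ⟨hlt.le, fun _ => hlt⟩
end

section
/- For a fixed multiset of labels with T ones and N − T zeros, AP(b) is maximized uniquely (as a function of the arrangement) by the non-increasing arrangement, with maximum value 1, and is minimized by the non-decreasing arrangement, with minimum value (1/T) Σ_{i=1}^{T} i/(N − T + i). -/
open Finset

/-!
Write `p(k)` for the number of ones among the first `k + 1` entries and `T` for the number of
ones. The precision `p(k)/(k+1)` is at most `1`, with equality iff no zero precedes position `k`.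
Since at most `N - 1 - k` ones follow position `k`, also `k + 1 ≤ (N - T) + p(k)`, with equality
iff no zero follows `k`. As `k` runs over the positions of the ones, `p(k)` runs bijectively
over `1, …, T`, so summing the termwise bounds gives both extremal values, and equality holds
iff no zero precedes (resp. follows) any one.
-/

lemma antitone_iff_forall_true {α : Type*} [Preorder α] {f : α → Bool} :
    Antitone f ↔ ∀ k, f k = true → ∀ j ≤ k, f j = true := by
  simp only [Antitone, Bool.le_iff_imp]
  exact ⟨fun h k hk j hjk => h hjk hk, fun h j k hjk hk => h k hk j hjk⟩

lemma monotone_iff_forall_lt_true {α : Type*} [PartialOrder α] {f : α → Bool} :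
    Monotone f ↔ ∀ k, f k = true → ∀ j, k < j → f j = true := by
  refine ⟨fun h k hk j hkj => Bool.le_iff_imp.mp (h hkj.le) hk,
    fun h k j hkj => Bool.le_iff_imp.mpr fun hk => ?_⟩
  rcases hkj.eq_or_lt with rfl | hlt
  exacts [hk, h k hk j hlt]

section AveragePrecision

variable {N : ℕ} (b : Fin N → Bool)

def trueSet : Finset (Fin N) := univ.filter (fun k => b k = true)

noncomputable def precisionAt (k : Fin N) : ℝ := (prefCount b k : ℝ) / ((k : ℕ) + 1)

variable {b}

lemma mem_trueSet {k : Fin N} : k ∈ trueSet b ↔ b k = true := by simp [trueSet]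

variable (b)

lemma numTrue_eq_card_trueSet : numTrue b = #(trueSet b) := rfl

lemma AP_eq_mul_sum_precisionAt :
    AP b = 1 / (numTrue b : ℝ) * ∑ k ∈ trueSet b, precisionAt b k := by
  unfold AP
  split_ifs with h
  · simp [h]
  · rfl

lemma prefCount_eq_card_filter_Iic (k : Fin N) :
    prefCount b k = #((Iic k).filter (fun j => b j = true)) := by
  unfold prefCount
  congr 1
  ext j
  simp

lemma prefCount_le_succ (k : Fin N) : prefCount b k ≤ k + 1 := by
  rw [prefCount_eq_card_filter_Iic, ← Fin.card_Iic]
  exact card_filter_le _ _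

lemma prefCount_eq_succ_iff (k : Fin N) : prefCount b k = k + 1 ↔ ∀ j ≤ k, b j = true := by
  rw [prefCount_eq_card_filter_Iic, ← Fin.card_Iic, card_filter_eq_iff]
  simp only [mem_Iic]

lemma numTrue_eq_prefCount_add (k : Fin N) :
    numTrue b = prefCount b k + #((Ioi k).filter (fun j => b j = true)) := by
  rw [numTrue_eq_card_trueSet, ← card_filter_add_card_filter_not (s := trueSet b) (· ≤ k),
    prefCount_eq_card_filter_Iic]
  congr 2 <;> ext j <;> simp [mem_trueSet, and_comm]

lemma numTrue_add_le (k : Fin N) : numTrue b + (k + 1) ≤ prefCount b k + N := by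
  have h := card_filter_le (Ioi k) (fun j => b j = true)
  rw [Fin.card_Ioi] at h
  rw [numTrue_eq_prefCount_add b k]
  omega

lemma numTrue_add_eq_iff (k : Fin N) :
    numTrue b + (k + 1) = prefCount b k + N ↔ ∀ j, k < j → b j = true := by
  have hcard := (Ioi k).card_filter_eq_iff (p := fun j => b j = true)
  simp only [mem_Ioi, Fin.card_Ioi] at hcard
  rw [← hcard, numTrue_eq_prefCount_add b k]
  have := k.2
  omega

lemma numTrue_le : numTrue b ≤ N :=
  (card_le_univ (trueSet b)).trans_eq (Fintype.card_fin N)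

lemma prefCount_pos {k : Fin N} (hk : b k = true) : 0 < prefCount b k := by
  rw [prefCount_eq_card_filter_Iic]
  exact card_pos.mpr ⟨k, by simp [hk]⟩

lemma prefCount_strictMonoOn : StrictMonoOn (prefCount b) (trueSet b) := by
  intro j _ k hk hjk
  simp only [prefCount_eq_card_filter_Iic]
  have hsub := filter_subset_filter (fun j => b j = true) (Iic_subset_Iic.mpr hjk.le)
  refine card_lt_card ((ssubset_iff_of_subset hsub).mpr ⟨k, ?_, ?_⟩)
  · simpa [mem_trueSet] using hk
  · simp [hjk.not_ge]

lemma image_prefCount_trueSet : (trueSet b).image (prefCount b) = Icc 1 (numTrue b) := by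
  refine eq_of_subset_of_card_le (fun i hi => ?_) ?_
  · obtain ⟨k, hk, rfl⟩ := mem_image.mp hi
    have := numTrue_eq_prefCount_add b k
    exact mem_Icc.mpr ⟨prefCount_pos b (mem_trueSet.mp hk), by omega⟩
  · rw [card_image_of_injOn (prefCount_strictMonoOn b).injOn, Nat.card_Icc,
      numTrue_eq_card_trueSet, Nat.add_sub_cancel]

lemma sum_Icc_numTrue_eq_sum_trueSet {M : Type*} [AddCommMonoid M] (f : ℕ → M) :
    ∑ i ∈ Icc 1 (numTrue b), f i = ∑ k ∈ trueSet b, f (prefCount b k) := by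
  rw [← image_prefCount_trueSet, sum_image (prefCount_strictMonoOn b).injOn]

lemma precisionAt_le_one (k : Fin N) : precisionAt b k ≤ 1 := by
  rw [precisionAt, div_le_one (by positivity)]
  exact_mod_cast prefCount_le_succ b k

lemma precisionAt_eq_one_iff (k : Fin N) : precisionAt b k = 1 ↔ ∀ j ≤ k, b j = true := by
  rw [precisionAt, div_eq_one_iff_eq (by positivity), ← prefCount_eq_succ_iff]
  norm_cast

lemma div_le_precisionAt (k : Fin N) :
    (prefCount b k : ℝ) / ((N - numTrue b : ℕ) + prefCount b k) ≤ precisionAt b k := by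
  have := numTrue_add_le b k
  have := numTrue_le b
  refine div_le_div_of_nonneg_left (by positivity) (by positivity) ?_
  norm_cast
  omega

lemma div_eq_precisionAt_iff {k : Fin N} (hk : b k = true) :
    (prefCount b k : ℝ) / ((N - numTrue b : ℕ) + prefCount b k) = precisionAt b k ↔
      ∀ j, k < j → b j = true := by
  have hp : (prefCount b k : ℝ) ≠ 0 := by exact_mod_cast (prefCount_pos b hk).ne'
  have := numTrue_le b
  rw [precisionAt, div_eq_mul_inv, div_eq_mul_inv, mul_right_inj' hp, inv_inj,
    ← numTrue_add_eq_iff]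
  norm_cast
  omega

lemma sum_precisionAt_le_numTrue : ∑ k ∈ trueSet b, precisionAt b k ≤ numTrue b :=
  (sum_le_sum fun k _ => precisionAt_le_one b k).trans_eq (by simp [numTrue_eq_card_trueSet])

lemma sum_precisionAt_eq_numTrue_iff :
    ∑ k ∈ trueSet b, precisionAt b k = numTrue b ↔ Antitone b := by
  have hT : (numTrue b : ℝ) = ∑ _k ∈ trueSet b, 1 := by simp [numTrue_eq_card_trueSet]
  rw [hT, sum_eq_sum_iff_of_le fun k _ => precisionAt_le_one b k, antitone_iff_forall_true]
  simp only [precisionAt_eq_one_iff, mem_trueSet]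

lemma sum_Icc_le_sum_precisionAt :
    ∑ i ∈ Icc 1 (numTrue b), (i : ℝ) / ((N - numTrue b : ℕ) + i) ≤
      ∑ k ∈ trueSet b, precisionAt b k := by
  rw [sum_Icc_numTrue_eq_sum_trueSet]
  exact sum_le_sum fun k _ => div_le_precisionAt b k

lemma sum_Icc_eq_sum_precisionAt_iff :
    ∑ i ∈ Icc 1 (numTrue b), (i : ℝ) / ((N - numTrue b : ℕ) + i) =
      ∑ k ∈ trueSet b, precisionAt b k ↔ Monotone b := by
  rw [sum_Icc_numTrue_eq_sum_trueSet, sum_eq_sum_iff_of_le fun k _ => div_le_precisionAt b k,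
    monotone_iff_forall_lt_true]
  refine forall_congr' fun k => ?_
  rw [mem_trueSet]
  exact imp_congr_right (div_eq_precisionAt_iff b)

end AveragePrecision

/-- Over all arrangements of `T ≥ 1` ones and `N - T` zeros, AP is maximized uniquely by
the non-increasing arrangement with maximum value `1`, and minimized by the
non-decreasing arrangement with minimum value `(1/T) Σ_{i=1}^T i / (N - T + i)`. -/
theorem stmt9 {N T : ℕ} (hT : 1 ≤ T) (b : Fin N → Bool) (hb : numTrue b = T) :
    (AP b ≤ 1 ∧ (AP b = 1 ↔ Antitone b)) ∧
    ((1 / (T : ℝ)) * ∑ i ∈ Finset.Icc 1 T, (i : ℝ) / ((N - T : ℕ) + i) ≤ AP b ∧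
      (AP b = (1 / (T : ℝ)) * ∑ i ∈ Finset.Icc 1 T, (i : ℝ) / ((N - T : ℕ) + i) ↔
        Monotone b)) := by
  subst hb
  have hpos : (0 : ℝ) < numTrue b := by exact_mod_cast hT
  rw [AP_eq_mul_sum_precisionAt]
  refine ⟨⟨?_, ?_⟩, ?_, ?_⟩
  · rw [one_div_mul_eq_div, div_le_one hpos]
    exact sum_precisionAt_le_numTrue b
  · rw [one_div_mul_eq_div, div_eq_one_iff_eq hpos.ne', sum_precisionAt_eq_numTrue_iff]
  · exact mul_le_mul_of_nonneg_left (sum_Icc_le_sum_precisionAt b) (by positivity)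
  · rw [mul_right_inj' (by positivity), eq_comm, sum_Icc_eq_sum_precisionAt_iff]
end
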